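/- arXiv:1811.00060 — 6 statements merged into one kernel-verified Lean document; each statement's English description precedes it below -/
import Mathlib

section
/- Let S be a subsemigroup of the full transformation monoid on a finite set [n], and let r ∈ S. Then r is a right zero of S if and only if [n] is the disjoint union over p in the image of r of the sets S⁻¹(p) = {q ∈ [n] : qs = p for some s ∈ S}; i.e., every q ∈ [n] has exactly one point of the image of r reachable from it under S. -/
/-- Right-action composition: `q (rcomp s t) = t (s q)`, i.e. "first `s`, then `t`". -/
def rcomp {α : Type*} (s t : α → α) : α → α := fun q => t (s q)

/-- Let `S` be a subsemigroup of the full transformation monoid on `Fin n` and `r ∈ S`.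
Then `r` is a right zero of `S` iff every point `q` has exactly one point of the image
of `r` reachable from it under `S` (i.e. `Fin n` is the disjoint union of the preimage
sets `S⁻¹(p)` for `p` in the image of `r`). -/
theorem rightZero_iff_disjoint_preimages (n : ℕ) (S : Set (Fin n → Fin n))
    (hS : ∀ s ∈ S, ∀ t ∈ S, rcomp s t ∈ S) (r : Fin n → Fin n) (hr : r ∈ S) :
    (∀ s ∈ S, rcomp s r = r) ↔
      ∀ q : Fin n, ∃! p : Fin n, p ∈ Set.range r ∧ ∃ s ∈ S, s q = p := by
  constructor
  · intro h q
    refine ⟨r q, ⟨⟨q, rfl⟩, r, hr, rfl⟩, ?_⟩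
    rintro p ⟨⟨x, rfl⟩, s, hs, hsq⟩
    have h1 : r (r x) = r x := congrFun (h r hr) x
    have h2 : r (s q) = r q := congrFun (h s hs) q
    rw [hsq] at h2
    rw [← h1, h2]
  · intro h s hs
    funext q
    obtain ⟨p, _, hu⟩ := h q
    have e1 : r (s q) = p := hu (r (s q)) ⟨⟨s q, rfl⟩, rcomp s r, hS s hs r hr, rfl⟩
    have e2 : r q = p := hu (r q) ⟨⟨q, rfl⟩, r, hr, rfl⟩
    exact e1.trans e2.symm
end

section
/- Let S ≤ T_n be a transformation semigroup on a finite set [n], and let s ∈ S be an element whose image has minimal cardinality among all elements of S. If for every q ∈ [n] there exists t ∈ S with qt a fixed point of S, then the image of s equals the set of fixed points of S, and s is a left zero of S. -/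
/-- If `s ∈ S ≤ T_n` has minimal image cardinality and every point can be sent into the
fixed-point set of `S`, then the image of `s` is exactly the fixed-point set of `S` and
`s` is a left zero. -/
theorem minimal_image_is_leftZero (n : ℕ) (S : Set (Fin n → Fin n))
    (hS : ∀ s ∈ S, ∀ t ∈ S, rcomp s t ∈ S) (s : Fin n → Fin n) (hs : s ∈ S)
    (hmin : ∀ t ∈ S, (Finset.image s Finset.univ).card ≤ (Finset.image t Finset.univ).card)
    (hfix : ∀ q : Fin n, ∃ t ∈ S, ∀ u ∈ S, u (t q) = t q) :
    Set.range s = {q : Fin n | ∀ u ∈ S, u q = q} ∧ ∀ u ∈ S, rcomp s u = s := by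
  -- Step 1: build one T ∈ S sending every point into Fix(S)
  have key : ∀ A : Finset (Fin n), ∃ T ∈ S, ∀ p ∈ A, ∀ u ∈ S, u (T p) = T p := by
    intro A
    induction A using Finset.induction_on with
    | empty => exact ⟨s, hs, by simp⟩
    | @insert a A ha ih =>
      obtain ⟨T, hT, hTfix⟩ := ih
      obtain ⟨t, ht, htfix⟩ := hfix (T a)
      refine ⟨rcomp T t, hS T hT t ht, ?_⟩
      intro p hp u hu
      rcases Finset.mem_insert.mp hp with rfl | hp
      · exact htfix u hu
      · have h1 := hTfix p hp t ht
        have h2 := hTfix p hp u hu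
        simp [rcomp, h1, h2]
  obtain ⟨T, hT, hTfix⟩ := key Finset.univ
  have hTfix' : ∀ q : Fin n, ∀ u ∈ S, u (T q) = T q := fun q =>
    hTfix q (Finset.mem_univ q)
  have hST : rcomp s T ∈ S := hS s hs T hT
  have hAB : Finset.image (rcomp s T) Finset.univ ⊆ Finset.image s Finset.univ := by
    intro x hx
    obtain ⟨q, -, hq⟩ := Finset.mem_image.mp hx
    have : s x = x := by
      rw [← hq]; exact hTfix' (s q) s hs
    exact Finset.mem_image.mpr ⟨x, Finset.mem_univ x, this⟩
  have heq := Finset.eq_of_subset_of_card_le hAB (hmin _ hST)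
  have hfixall : ∀ q : Fin n, ∀ u ∈ S, u (s q) = s q := by
    intro q u hu
    have hmem : s q ∈ Finset.image (rcomp s T) Finset.univ := by
      rw [heq]; exact Finset.mem_image.mpr ⟨q, Finset.mem_univ q, rfl⟩
    obtain ⟨p, -, hp⟩ := Finset.mem_image.mp hmem
    rw [← hp]
    exact hTfix' (s p) u hu
  constructor
  · ext q
    constructor
    · rintro ⟨p, rfl⟩
      exact hfixall p
    · intro hq
      exact ⟨q, hq s hs⟩
  · intro u hu
    funext q
    exact hfixall q u hu
end

section
/- Let a₁,…,a_k be transformations of a finite set Q and let S = ⟨a₁,…,a_k⟩. Then S is a group if and only if (1) all generators have the same image X ⊆ Q, (2) each generator restricted to X is a permutation of X, and (3) all generators have the same kernel (where ker(a) = {(p,q) : pa = qa}). -/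
/-- Membership in the subsemigroup generated by a set of transformations. -/
inductive InClosure {α : Type*} (A : Set (α → α)) : (α → α) → Prop
  | base {a : α → α} : a ∈ A → InClosure A a
  | mul {s t : α → α} : InClosure A s → InClosure A t → InClosure A (rcomp s t)

private lemma idem_aux {α : Type*} (f : α → α) (m n : ℕ) (hmn : m < n)
    (heq : f^[m] = f^[n]) : ∃ c, 1 ≤ c ∧ f^[c + c] = f^[c] := by
  obtain ⟨d, hd1, rfl⟩ : ∃ d, 1 ≤ d ∧ n = m + d := ⟨n - m, by omega, by omega⟩
  have key : ∀ j, f^[m + j + d] = f^[m + j] := by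
    intro j
    calc f^[m + j + d] = f^[j + (m + d)] := by rw [show m + j + d = j + (m + d) by omega]
      _ = f^[j] ∘ f^[m + d] := Function.iterate_add f j (m + d)
      _ = f^[j] ∘ f^[m] := by rw [← heq]
      _ = f^[j + m] := (Function.iterate_add f j m).symm
      _ = f^[m + j] := by rw [show j + m = m + j by omega]
  have key2 : ∀ c j, f^[m + j + c * d] = f^[m + j] := by
    intro c
    induction c with
    | zero => simp
    | succ c ih =>
      intro j
      calc f^[m + j + (c + 1) * d] = f^[m + (j + d) + c * d] := by
            rw [show m + j + (c + 1) * d = m + (j + d) + c * d by ring]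
        _ = f^[m + (j + d)] := ih (j + d)
        _ = f^[m + j + d] := by rw [show m + (j + d) = m + j + d by omega]
        _ = f^[m + j] := key j
  have hm1 : m + 1 ≤ (m + 1) * d := Nat.le_mul_of_pos_right (m + 1) hd1
  refine ⟨(m + 1) * d, by omega, ?_⟩
  calc f^[(m+1)*d + (m+1)*d] = f^[m + ((m+1)*d - m) + (m+1)*d] := by
        rw [show (m+1)*d + (m+1)*d = m + ((m+1)*d - m) + (m+1)*d by omega]
    _ = f^[m + ((m+1)*d - m)] := key2 (m+1) _
    _ = f^[(m+1)*d] := by rw [show m + ((m+1)*d - m) = (m+1)*d by omega]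

private lemma exists_idem_iterate {α : Type*} [Finite α] (f : α → α) :
    ∃ n, 1 ≤ n ∧ f^[n + n] = f^[n] := by
  obtain ⟨m, n, hne, heq⟩ :=
    Finite.exists_ne_map_eq_of_infinite (fun i : ℕ => f^[i])
  rcases lt_or_gt_of_ne hne with h | h
  · exact idem_aux f m n h heq
  · exact idem_aux f n m h heq.symm

/-- `S = ⟨a₁,…,a_k⟩ ≤ T_Q` (Q finite) is a group iff (1) all generators have the same
image, (2) each generator restricted to its image is a permutation of it, and
(3) all generators have the same kernel. -/
theorem group_iff_generators (Q : Type*) [Fintype Q] (k : ℕ) (hk : 0 < k)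
    (a : Fin k → Q → Q) :
    (∃ e, InClosure (Set.range a) e ∧
        (∀ s, InClosure (Set.range a) s → rcomp e s = s ∧ rcomp s e = s) ∧
        (∀ s, InClosure (Set.range a) s →
          ∃ t, InClosure (Set.range a) t ∧ rcomp s t = e ∧ rcomp t s = e)) ↔
      ((∀ i j : Fin k, Set.range (a i) = Set.range (a j)) ∧
        (∀ i : Fin k, Set.BijOn (a i) (Set.range (a i)) (Set.range (a i))) ∧
        (∀ i j : Fin k, ∀ p q : Q, a i p = a i q ↔ a j p = a j q)) := by
  constructor
  · rintro ⟨e, heS, hid, hinv⟩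
    have hgen : ∀ i, InClosure (Set.range a) (a i) := fun i => .base ⟨i, rfl⟩
    have hfix : ∀ s, InClosure (Set.range a) s → ∀ q, e (s q) = s q := fun s hs q =>
      congrFun (hid s hs).2 q
    have hrange : ∀ s, InClosure (Set.range a) s → Set.range s = Set.range e := by
      intro s hs
      apply subset_antisymm
      · rintro y ⟨q, rfl⟩
        exact ⟨s q, hfix s hs q⟩
      · rintro y ⟨q, rfl⟩
        obtain ⟨t, htS, hst, hts⟩ := hinv s hs
        exact ⟨t q, congrFun hts q⟩
    have hefix : ∀ q, e (e q) = e q := hfix e heS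
    have hfixX : ∀ i, ∀ x ∈ Set.range (a i), e x = x := by
      intro i x hx
      rw [hrange _ (hgen i)] at hx
      obtain ⟨q, rfl⟩ := hx
      exact hefix q
    refine ⟨?_, ?_, ?_⟩
    · intro i j
      rw [hrange _ (hgen i), hrange _ (hgen j)]
    · intro i
      refine ⟨fun x _ => Set.mem_range_self x, ?_, ?_⟩
      · intro x hx y hy hxy
        obtain ⟨t, htS, hst, hts⟩ := hinv (a i) (hgen i)
        have h1 : t (a i x) = e x := congrFun hst x
        have h2 : t (a i y) = e y := congrFun hst y
        calc x = e x := (hfixX i x hx).symm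
          _ = t (a i x) := h1.symm
          _ = t (a i y) := by rw [hxy]
          _ = e y := h2
          _ = y := hfixX i y hy
      · rintro y ⟨q, rfl⟩
        refine ⟨e q, ?_, ?_⟩
        · rw [hrange _ (hgen i)]; exact ⟨q, rfl⟩
        · exact congrFun (hid (a i) (hgen i)).1 q
    · intro i j p q
      have key : ∀ l : Fin k, ∀ p q : Q, (a l p = a l q ↔ e p = e q) := by
        intro l p q
        obtain ⟨t, htS, hst, hts⟩ := hinv (a l) (hgen l)
        constructor
        · intro h
          have h1 : t (a l p) = e p := congrFun hst p
          have h2 : t (a l q) = e q := congrFun hst q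
          rw [← h1, ← h2, h]
        · intro h
          have h1 : a l (e p) = a l p := congrFun (hid (a l) (hgen l)).1 p
          have h2 : a l (e q) = a l q := congrFun (hid (a l) (hgen l)).1 q
          rw [← h1, ← h2, h]
      rw [key i, key j]
  · rintro ⟨h1, h2, h3⟩
    set i0 : Fin k := ⟨0, hk⟩ with hi0
    set X := Set.range (a i0) with hX
    have lemA : ∀ s, InClosure (Set.range a) s →
        Set.range s = X ∧ Set.BijOn s X X ∧ ∀ p q, s p = s q ↔ a i0 p = a i0 q := by
      intro s hs
      induction hs with
      | base h =>
        obtain ⟨i, rfl⟩ := h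
        refine ⟨h1 i i0, ?_, h3 i i0⟩
        have := h2 i
        rwa [h1 i i0] at this
      | @mul s' t' hs ht ihs iht =>
        obtain ⟨hrs, hbs, hks⟩ := ihs
        obtain ⟨hrt, hbt, hkt⟩ := iht
        refine ⟨?_, hbt.comp hbs, ?_⟩
        · have hc : Set.range (rcomp s' t') = t' '' Set.range s' := Set.range_comp t' s'
          rw [hc, hrs, hbt.image_eq]
        · intro p q
          show t' (s' p) = t' (s' q) ↔ _
          rw [← hks p q]
          constructor
          · intro h
            exact hbt.injOn (hrs ▸ Set.mem_range_self p) (hrs ▸ Set.mem_range_self q) h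
          · intro h; rw [h]
    have memX : ∀ s, InClosure (Set.range a) s → ∀ q, s q ∈ X := fun s hs q =>
      (lemA s hs).1 ▸ Set.mem_range_self q
    have iterS : ∀ s, InClosure (Set.range a) s → ∀ n, 1 ≤ n →
        InClosure (Set.range a) s^[n] := by
      intro s hs n hn
      induction n with
      | zero => omega
      | succ n ih =>
        rcases Nat.eq_zero_or_pos n with h0 | h0
        · subst h0; simpa using hs
        · have hrec : s^[n + 1] = rcomp s s^[n] := by
            funext q
            exact Function.iterate_succ_apply s n q
          rw [hrec]
          exact .mul hs (ih h0)
    have idemfix : ∀ u, InClosure (Set.range a) u → rcomp u u = u → ∀ x ∈ X, u x = x := by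
      intro u hu hidem x hx
      obtain ⟨y, hy, rfl⟩ := (lemA u hu).2.1.surjOn hx
      calc u (u y) = rcomp u u y := rfl
        _ = u y := by rw [hidem]
    have idemid : ∀ u, InClosure (Set.range a) u → rcomp u u = u →
        ∀ s, InClosure (Set.range a) s → rcomp u s = s ∧ rcomp s u = s := by
      intro u hu hidem s hs
      constructor
      · funext q
        show s (u q) = s q
        rw [(lemA s hs).2.2, ← (lemA u hu).2.2]
        exact congrFun hidem q
      · funext q
        exact idemfix u hu hidem _ (memX s hs q)
    obtain ⟨n0, hn0, hn0idem⟩ := exists_idem_iterate (a i0)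
    set e := (a i0)^[n0] with he
    have heS : InClosure (Set.range a) e := iterS (a i0) (.base ⟨i0, rfl⟩) n0 hn0
    have heidem : rcomp e e = e :=
      ((Function.iterate_add (a i0) n0 n0).symm.trans hn0idem : e ∘ e = e)
    refine ⟨e, heS, fun s hs => idemid e heS heidem s hs, ?_⟩
    intro s hs
    obtain ⟨n, hn, hidem⟩ := exists_idem_iterate s
    have hsn : InClosure (Set.range a) s^[n] := iterS s hs n hn
    have hsnidem : rcomp s^[n] s^[n] = s^[n] :=
      ((Function.iterate_add s n n).symm.trans hidem : s^[n] ∘ s^[n] = s^[n])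
    have huniq : s^[n] = e := by
      have hA := (idemid s^[n] hsn hsnidem e heS).1
      have hB := (idemid e heS heidem s^[n] hsn).2
      exact hB.symm.trans hA
    obtain ⟨m, hm1, hm⟩ : ∃ m, 1 ≤ m ∧ n + n = m + 1 := ⟨n + n - 1, by omega, by omega⟩
    refine ⟨s^[m], iterS s hs m hm1, ?_, ?_⟩
    · funext q
      show s^[m] (s q) = e q
      exact (Function.iterate_succ_apply s m q).symm.trans (by rw [Nat.succ_eq_add_one, ← hm, hidem, huniq])
    · funext q
      show s (s^[m] q) = e q
      exact (Function.iterate_succ_apply' s m q).symm.trans (by rw [Nat.succ_eq_add_one, ← hm, hidem, huniq])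
end

section
/- Let S = ⟨a₁,…,a_k⟩ ≤ T_n be a finite transformation semigroup. Then S is R-trivial (sS¹ = tS¹ implies s = t) if and only if for every q ∈ [n] and every s ∈ S with q·s ≠ q, there is no t ∈ S with q·s·t = q. (Equivalently, every cycle in the transformation graph of the generators has length 1.) -/
lemma rcomp_assoc {α : Type*} (a b c : α → α) :
    rcomp (rcomp a b) c = rcomp a (rcomp b c) := rfl

lemma iterate_mem {α : Type*} {A : Set (α → α)} {c : α → α}
    (hc : InClosure A c) : ∀ m, 1 ≤ m → InClosure A (c^[m]) := by
  intro m hm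
  induction m with
  | zero => omega
  | succ p ih =>
    rcases Nat.eq_zero_or_pos p with h | h
    · subst h; simpa using hc
    · have : c^[p + 1] = rcomp (c^[p]) c := by
        funext z
        simp [rcomp, Function.iterate_succ_apply']
      rw [this]
      exact (ih h).mul hc

lemma rset_eq {α : Type*} (A : Set (α → α)) {x y u v : α → α}
    (hu : InClosure A u) (hv : InClosure A v)
    (hxy : y = rcomp x u) (hyx : x = rcomp y v) :
    ({f | f = x ∨ ∃ w, InClosure A w ∧ f = rcomp x w} : Set (α → α)) =
      {f | f = y ∨ ∃ w, InClosure A w ∧ f = rcomp y w} := by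
  ext f
  constructor
  · rintro (rfl | ⟨w, hw, rfl⟩)
    · exact Or.inr ⟨v, hv, hyx⟩
    · exact Or.inr ⟨rcomp v w, hv.mul hw, by rw [hyx, rcomp_assoc]⟩
  · rintro (rfl | ⟨w, hw, rfl⟩)
    · exact Or.inr ⟨u, hu, hxy⟩
    · exact Or.inr ⟨rcomp u w, hu.mul hw, by rw [hxy, rcomp_assoc]⟩

/-- `S = ⟨a₁,…,a_k⟩ ≤ T_n` is `R`-trivial (`sS¹ = tS¹` implies `s = t`) iff
for every `q` and `s ∈ S` with `q·s ≠ q`, there is no `t ∈ S` with `q·s·t = q`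
(every cycle in the transformation graph has length 1). -/
theorem rTrivial_iff_no_long_cycle (n k : ℕ) (a : Fin k → Fin n → Fin n) :
    (∀ s t, InClosure (Set.range a) s → InClosure (Set.range a) t →
        ({f | f = s ∨ ∃ u, InClosure (Set.range a) u ∧ f = rcomp s u} :
            Set (Fin n → Fin n)) =
          {f | f = t ∨ ∃ u, InClosure (Set.range a) u ∧ f = rcomp t u} →
        s = t) ↔
      ∀ (q : Fin n) s, InClosure (Set.range a) s → s q ≠ q →
        ∀ t, InClosure (Set.range a) t → t (s q) ≠ q := by
  constructor
  · -- R-trivial → no long cycle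
    intro HR q s hs hsq t ht hts
    set c : Fin n → Fin n := rcomp s t with hc
    have hcS : InClosure (Set.range a) c := hs.mul ht
    have hcq : c q = q := hts
    -- eventually periodic iterates
    have hpig : ∃ i j : ℕ, i < j ∧ c^[i] = c^[j] := by
      obtain ⟨i, j, hij, h⟩ :=
        Finite.exists_ne_map_eq_of_infinite (fun m : ℕ => c^[m])
      rcases lt_or_gt_of_ne hij with h' | h'
      · exact ⟨i, j, h', h⟩
      · exact ⟨j, i, h', h.symm⟩
    obtain ⟨i, j, hij, hfix⟩ := hpig
    have hp : 1 ≤ j - i := by omega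
    have hper : ∀ m, i ≤ m → c^[m + (j - i)] = c^[m] := by
      intro m hm
      obtain ⟨d, rfl⟩ := Nat.exists_eq_add_of_le hm
      funext z
      have h1 : i + d + (j - i) = d + j := by omega
      have h2 : i + d = d + i := by omega
      rw [h1, h2, Function.iterate_add_apply, Function.iterate_add_apply, ← hfix]
    have hmul : ∀ l m, i ≤ m → c^[m + l * (j - i)] = c^[m] := by
      intro l
      induction l with
      | zero => intro m hm; simp
      | succ l ih =>
        intro m hm
        have h1 : m + (l + 1) * (j - i) = (m + l * (j - i)) + (j - i) := by ring
        rw [h1, hper _ (by omega), ih m hm]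
    set r : ℕ := (i + 2) * (j - i) with hr
    have hrge : i + 2 ≤ r := Nat.le_mul_of_pos_right _ (by omega)
    have hr2 : 2 ≤ r := by omega
    have hr2r : c^[r + r] = c^[r] := by
      have := hmul (i + 2) r (by omega)
      rw [← hr] at this
      exact this
    have hxqr : c^[r] q = q := Function.iterate_fixed hcq r
    by_cases hcase : c^[r + 1] = c^[r]
    · -- pair (c^[r], c^[r]·s)
      set x := c^[r] with hx
      set y := rcomp x s with hy
      have hyx : x = rcomp y (rcomp t x) := by
        funext z
        show c^[r] z = c^[r] (t (s (c^[r] z)))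
        have h1 : t (s (c^[r] z)) = c (c^[r] z) := rfl
        rw [h1, ← Function.iterate_succ_apply' c r, hcase,
          ← Function.iterate_add_apply, hr2r]
      have hxS : InClosure (Set.range a) x := iterate_mem hcS r (by omega)
      have heq : x = y :=
        HR x y hxS (hxS.mul hs)
          (rset_eq (Set.range a) hs (ht.mul hxS) rfl hyx)
      have : q = s q := by
        calc q = x q := hxqr.symm
        _ = y q := by rw [heq]
        _ = s (c^[r] q) := rfl
        _ = s q := by rw [← hx, hxqr]
      exact hsq this.symm
    · -- pair (c^[r], c^[r+1])
      set x := c^[r] with hx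
      set y := c^[r + 1] with hy
      have hxy : y = rcomp x c := by
        funext z
        show c^[r + 1] z = c (c^[r] z)
        rw [Function.iterate_succ_apply']
      have hyx : x = rcomp y (c^[r - 1]) := by
        funext z
        show c^[r] z = c^[r - 1] (c^[r + 1] z)
        rw [← Function.iterate_add_apply]
        have : r - 1 + (r + 1) = r + r := by omega
        rw [this, hr2r]
      have heq : x = y :=
        HR x y (iterate_mem hcS r (by omega)) (iterate_mem hcS (r + 1) (by omega))
          (rset_eq (Set.range a) hcS (iterate_mem hcS (r - 1) (by omega)) hxy hyx)
      exact hcase heq.symm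
  · -- no long cycle → R-trivial
    intro H s t hs ht hset
    have hsmem : s ∈ ({f | f = t ∨ ∃ u, InClosure (Set.range a) u ∧ f = rcomp t u} :
        Set (Fin n → Fin n)) := by
      rw [← hset]; exact Or.inl rfl
    have htmem : t ∈ ({f | f = s ∨ ∃ u, InClosure (Set.range a) u ∧ f = rcomp s u} :
        Set (Fin n → Fin n)) := by
      rw [hset]; exact Or.inl rfl
    rcases hsmem with h | ⟨u, hu, hsu⟩
    · exact h
    rcases htmem with h | ⟨v, hv, htv⟩
    · exact h.symm
    funext q
    by_contra hne
    have h1 : t q = v (s q) := congrFun htv q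
    have h2 : s q = u (t q) := congrFun hsu q
    have hvp : v (s q) ≠ s q := by
      intro h
      exact hne (by rw [h1, h])
    exact H (s q) v hv hvp u hu (by rw [← h1]; exact h2.symm)
end

section
/- Let S = ⟨a₁,…,a_k⟩ ≤ T_n with kernel congruence ker(S) on [n]. An element ℓ ∈ S is a left identity of S (ℓs = s for all s ∈ S) if and only if there is a generator a_i whose induced action on [n]/ker(S) is a permutation and ℓ equals the idempotent power of a_i. -/
/-- A bijection of a finite set has an iterate fixing the set pointwise. -/
lemma exists_iterate_fix {α : Type*} [Fintype α] (f : α → α) (T : Set α)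
    (hm : Set.MapsTo f T T) (hs : Set.SurjOn f T T) :
    ∃ M : ℕ, 0 < M ∧ ∀ x ∈ T, f^[M] x = x := by
  classical
  set g : T → T := hm.restrict f T T with hg
  have hgsurj : Function.Surjective g := by
    rintro ⟨y, hy⟩
    obtain ⟨x, hx, hfx⟩ := hs hy
    exact ⟨⟨x, hx⟩, Subtype.ext hfx⟩
  have hgbij : Function.Bijective g := Finite.surjective_iff_bijective.mp hgsurj
  let π : Equiv.Perm T := Equiv.ofBijective g hgbij
  have key : ∀ (m : ℕ) (x : α) (hx : x ∈ T), ((π ^ m) ⟨x, hx⟩ : α) = f^[m] x := by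
    intro m
    induction m with
    | zero => intro x hx; rfl
    | succ m ih =>
      intro x hx
      have h1 : (π ^ (m + 1)) ⟨x, hx⟩ = (π ^ m) (π ⟨x, hx⟩) := by
        rw [pow_succ]; rfl
      have h2 : π ⟨x, hx⟩ = ⟨f x, hm hx⟩ := rfl
      rw [h1, h2, ih (f x) (hm hx), Function.iterate_succ_apply]
  refine ⟨orderOf π, orderOf_pos π, fun x hx => ?_⟩
  have := key (orderOf π) x hx
  rw [pow_orderOf_eq_one] at this
  simpa using this.symm

/-- Positive iterates of a generator are in the closure. -/
lemma iterate_mem_closure {α : Type*} (A : Set (α → α)) (f : α → α) (hf : f ∈ A) :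
    ∀ m : ℕ, 0 < m → InClosure A (f^[m]) := by
  intro m
  induction m with
  | zero => intro h; exact absurd h (lt_irrefl 0)
  | succ m ih =>
    intro _
    rcases Nat.eq_zero_or_pos m with hm | hm
    · subst hm
      have : f^[1] = f := Function.iterate_one f
      rw [this]; exact .base hf
    · have : f^[m + 1] = rcomp (f^[m]) f := by
        funext q; simp [rcomp, Function.iterate_succ_apply']
      rw [this]; exact .mul (ih hm) (.base hf)

/-- Every element of the closure ends (in application order) with a generator. -/
lemma closure_decomp {α : Type*} (A : Set (α → α)) {x : α → α} (hx : InClosure A x) :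
    ∃ g ∈ A, ∃ v : α → α, (v = id ∨ InClosure A v) ∧ x = rcomp v g := by
  induction hx with
  | base h => exact ⟨_, h, id, Or.inl rfl, rfl⟩
  | @mul s t hs ht ihs iht =>
    obtain ⟨g, hg, v, hv, rfl⟩ := iht
    refine ⟨g, hg, rcomp s v, ?_, rfl⟩
    rcases hv with rfl | hv
    · exact Or.inr hs
    · exact Or.inr (.mul hs hv)

/-- `ℓ ∈ S = ⟨a₁,…,a_k⟩ ≤ T_n` is a left identity of `S` iff some generator `a_i`
induces a permutation of `[n]/ker(S)` (equivalently, the induced map on the quotient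
is injective) and `ℓ` is the idempotent power of `a_i`. -/
theorem leftIdentity_iff (n k : ℕ) (a : Fin k → Fin n → Fin n) (ℓ : Fin n → Fin n)
    (hℓ : InClosure (Set.range a) ℓ) :
    (∀ s, InClosure (Set.range a) s → rcomp ℓ s = s) ↔
      ∃ i : Fin k,
        (∀ p q : Fin n,
          (∀ s, InClosure (Set.range a) s → s (a i p) = s (a i q)) →
          (∀ s, InClosure (Set.range a) s → s p = s q)) ∧
        ∃ m : ℕ, 0 < m ∧ (a i)^[m] ∘ (a i)^[m] = (a i)^[m] ∧ ℓ = (a i)^[m] := by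
  classical
  constructor
  · intro hL
    obtain ⟨g, ⟨i, rfl⟩, v, hv, hdec⟩ := closure_decomp (Set.range a) hℓ
    have hAi : InClosure (Set.range a) (a i) := .base ⟨i, rfl⟩
    have hidem : ∀ q, ℓ (ℓ q) = ℓ q := fun q => congrFun (hL ℓ hℓ) q
    have hcomm : ∀ q, a i (ℓ q) = a i q := fun q => congrFun (hL (a i) hAi) q
    have hsub : Set.range ℓ ⊆ Set.range (a i) := by
      rintro _ ⟨q, rfl⟩
      exact ⟨v q, by rw [hdec]; rfl⟩
    have himg : Set.range (a i) = (a i) '' (Set.range ℓ) := by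
      apply Set.Subset.antisymm
      · rintro _ ⟨q, rfl⟩
        exact ⟨ℓ q, ⟨q, rfl⟩, hcomm q⟩
      · rintro _ ⟨x, _, rfl⟩
        exact ⟨x, rfl⟩
    have hcard : (Set.range (a i)).ncard ≤ (Set.range ℓ).ncard := by
      rw [himg]; exact Set.ncard_image_le (Set.toFinite _)
    have hT : Set.range ℓ = Set.range (a i) :=
      Set.eq_of_subset_of_ncard_le hsub hcard (Set.toFinite _)
    have hmaps : Set.MapsTo (a i) (Set.range (a i)) (Set.range (a i)) :=
      fun x _ => ⟨x, rfl⟩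
    have hsurj : Set.SurjOn (a i) (Set.range (a i)) (Set.range (a i)) := by
      rintro _ ⟨q, rfl⟩
      exact ⟨ℓ q, hT ▸ ⟨q, rfl⟩, hcomm q⟩
    obtain ⟨M, hM, hfix⟩ := exists_iterate_fix (a i) _ hmaps hsurj
    obtain ⟨M', rfl⟩ := Nat.exists_eq_succ_of_ne_zero hM.ne'
    have hiter : ∀ q, (a i)^[M' + 1] (ℓ q) = (a i)^[M' + 1] q := by
      intro q
      rw [Function.iterate_succ_apply, Function.iterate_succ_apply, hcomm q]
    have hleq : ℓ = (a i)^[M' + 1] := by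
      funext q
      have h1 : (a i)^[M' + 1] q = (a i)^[M' + 1] (ℓ q) := (hiter q).symm
      have h2 : (a i)^[M' + 1] (ℓ q) = ℓ q := hfix (ℓ q) (hsub ⟨q, rfl⟩)
      rw [h1, h2]
    refine ⟨i, ?_, M' + 1, Nat.succ_pos _, ?_, hleq⟩
    · intro p q h
      have hkey : ∀ m, ∀ s, InClosure (Set.range a) s →
          s ((a i)^[m] (a i p)) = s ((a i)^[m] (a i q)) := by
        intro m
        induction m with
        | zero => intro s hs; exact h s hs
        | succ m ih =>
          intro s hs
          rw [Function.iterate_succ_apply', Function.iterate_succ_apply']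
          exact ih (rcomp (a i) s) (.mul hAi hs)
      intro s hs
      calc s p = s (ℓ p) := (congrFun (hL s hs) p).symm
        _ = s ((a i)^[M'] (a i p)) := by rw [hleq, Function.iterate_succ_apply]
        _ = s ((a i)^[M'] (a i q)) := hkey M' s hs
        _ = s (ℓ q) := by rw [hleq, Function.iterate_succ_apply]
        _ = s q := congrFun (hL s hs) q
    · funext q
      have h3 := hidem q
      rw [hleq] at h3
      simpa using h3
  · rintro ⟨i, hinj, m, hm, hid, rfl⟩
    have hinjIter : ∀ (r : ℕ) (p q : Fin n),
        (∀ s, InClosure (Set.range a) s → s ((a i)^[r] p) = s ((a i)^[r] q)) →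
        ∀ s, InClosure (Set.range a) s → s p = s q := by
      intro r
      induction r with
      | zero => intro p q h; exact h
      | succ r ih =>
        intro p q h
        refine hinj p q (ih (a i p) (a i q) ?_)
        intro s hs
        have h4 := h s hs
        rwa [Function.iterate_succ_apply, Function.iterate_succ_apply] at h4
    intro s hs
    funext q
    show s ((a i)^[m] q) = s q
    refine hinjIter m ((a i)^[m] q) q ?_ s hs
    intro s' _
    congr 1
    exact congrFun hid q
end

section
/- Let S = ⟨a₁,…,a_k⟩ ≤ T_n and let [n]S = ⋃_{s∈S} [n]s be the union of the images of elements of S. An element r ∈ S is a right identity of S (sr = s for all s ∈ S) if and only if there is a generator a_i whose restriction to [n]S is a permutation of [n]S and r equals the idempotent power of a_i. -/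
open Function Set

lemma inClosure_decomp {α : Type*} {A : Set (α → α)} {s : α → α} (hs : InClosure A s) :
    ∃ g ∈ A, s = g ∨ ∃ t, InClosure A t ∧ s = rcomp g t := by
  induction hs with
  | base h => exact ⟨_, h, Or.inl rfl⟩
  | @mul s t hs ht ihs iht =>
    obtain ⟨g, hg, heq | ⟨u, hu, heq⟩⟩ := ihs
    · exact ⟨g, hg, Or.inr ⟨t, ht, by subst heq; rfl⟩⟩
    · exact ⟨g, hg, Or.inr ⟨rcomp u t, InClosure.mul hu ht, by subst heq; rfl⟩⟩

lemma idem_core {α : Type*} (f : α → α) {i j : ℕ} (h : i < j) (hij : f^[i] = f^[j]) :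
    ∃ m, 0 < m ∧ f^[m] ∘ f^[m] = f^[m] := by
  set d := j - i with hd
  have hd0 : 0 < d := by omega
  have step : ∀ e, i ≤ e → f^[e + d] = f^[e] := by
    intro e he
    have h1 : e + d = (e - i) + j := by omega
    have h2 : e = (e - i) + i := by omega
    rw [h1, Function.iterate_add, ← hij, ← Function.iterate_add, ← h2]
  have rep : ∀ c e, i ≤ e → f^[e + c * d] = f^[e] := by
    intro c
    induction c with
    | zero => simp
    | succ c ih =>
      intro e he
      have h1 : e + (c + 1) * d = (e + c * d) + d := by ring
      rw [h1, step _ (by omega), ih e he]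
  refine ⟨(i + 1) * d, by positivity, ?_⟩
  have hm : i ≤ (i + 1) * d := by nlinarith
  calc f^[(i + 1) * d] ∘ f^[(i + 1) * d] = f^[(i + 1) * d + (i + 1) * d] :=
        (Function.iterate_add f _ _).symm
    _ = f^[(i + 1) * d] := rep _ _ hm

lemma exists_idempotent_pow {α : Type*} [Finite α] (f : α → α) :
    ∃ m, 0 < m ∧ f^[m] ∘ f^[m] = f^[m] := by
  obtain ⟨i, j, hne, hij⟩ := Finite.exists_ne_map_eq_of_infinite (fun k : ℕ => f^[k])
  rcases hne.lt_or_gt with h | h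
  · exact idem_core f h hij
  · exact idem_core f h hij.symm

lemma injOn_iterate {α : Type*} {f : α → α} {X : Set α} (hm : MapsTo f X X)
    (hi : InjOn f X) : ∀ m, InjOn f^[m] X := by
  intro m
  induction m with
  | zero => simpa using injOn_id X
  | succ m ih =>
    rw [Function.iterate_succ]
    exact ih.comp hi hm

lemma iterate_fixed_on {α : Type*} {f : α → α} {X : Set α} (hm : MapsTo f X X)
    (hi : InjOn f X) {m : ℕ} (hid : f^[m] ∘ f^[m] = f^[m]) :
    ∀ x ∈ X, f^[m] x = x := by
  intro x hx
  have h1 : f^[m] (f^[m] x) = f^[m] x := congrFun hid x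
  exact injOn_iterate hm hi m (hm.iterate m hx) hx h1

/-- `r ∈ S = ⟨a₁,…,a_k⟩ ≤ T_n` is a right identity of `S` iff some generator `a_i`
restricts to a permutation of `[n]S = ⋃_{s ∈ S} [n]s` and `r` is the idempotent power
of `a_i`. -/
theorem rightIdentity_iff (n k : ℕ) (a : Fin k → Fin n → Fin n) (r : Fin n → Fin n)
    (hr : InClosure (Set.range a) r) :
    (∀ s, InClosure (Set.range a) s → rcomp s r = s) ↔
      ∃ i : Fin k,
        Set.BijOn (a i)
          {q : Fin n | ∃ s, InClosure (Set.range a) s ∧ ∃ p, s p = q}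
          {q : Fin n | ∃ s, InClosure (Set.range a) s ∧ ∃ p, s p = q} ∧
        ∃ m : ℕ, 0 < m ∧ (a i)^[m] ∘ (a i)^[m] = (a i)^[m] ∧ r = (a i)^[m] := by
  set A := Set.range a with hA
  set X : Set (Fin n) := {q : Fin n | ∃ s, InClosure A s ∧ ∃ p, s p = q} with hX
  have hmem : ∀ s, InClosure A s → ∀ q, s q ∈ X := fun s hs q => ⟨s, hs, q, rfl⟩
  have hmapsTo : ∀ s, InClosure A s → MapsTo s X X := fun s hs q _ => hmem s hs q
  constructor
  · intro hid
    -- r is the identity on X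
    have hrid : ∀ x ∈ X, r x = x := by
      rintro x ⟨s, hs, p, rfl⟩
      exact congrFun (hid s hs) p
    obtain ⟨g, hgA, hcase⟩ := inClosure_decomp hr
    obtain ⟨i, rfl⟩ := hgA
    set f := a i with hf
    have hfC : InClosure A f := InClosure.base ⟨i, rfl⟩
    have hfm : MapsTo f X X := hmapsTo f hfC
    -- f is injective on X
    have hfi : InjOn f X := by
      rcases hcase with rfl | ⟨t, htC, rfl⟩
      · intro x hx y hy hxy
        rw [← hrid x hx, ← hrid y hy, hxy]
      · intro x hx y hy hxy
        have hx' : rcomp f t x = x := hrid x hx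
        have hy' : rcomp f t y = y := hrid y hy
        rw [← hx', ← hy']
        show t (f x) = t (f y)
        rw [hxy]
    have hbij : Set.BijOn f X X :=
      ((Set.toFinite X).injOn_iff_bijOn_of_mapsTo hfm).mp hfi
    obtain ⟨m, hm0, hidem⟩ := exists_idempotent_pow f
    have hfix : ∀ x ∈ X, f^[m] x = x := iterate_fixed_on hfm hfi hidem
    refine ⟨i, hbij, m, hm0, hidem, ?_⟩
    obtain ⟨m', rfl⟩ : ∃ m', m = m' + 1 := ⟨m - 1, by omega⟩
    funext q
    have hfq : f q ∈ X := hmem f hfC q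
    rcases hcase with rfl | ⟨t, htC, rfl⟩
    · -- r = f, so f is the identity on X, hence all iterates fix X
      have hfid : ∀ x ∈ X, f x = x := hrid
      have hall : ∀ c, ∀ x ∈ X, f^[c] x = x := by
        intro c
        induction c with
        | zero => simp
        | succ c ih =>
          intro x hx
          rw [Function.iterate_succ_apply, ih (f x) (hfm hx)]
          exact hfid x hx
      rw [Function.iterate_succ_apply, hall m' (f q) hfq]
    · -- r = rcomp f t; show t agrees with f^[m'] on X
      have hkey : ∀ y ∈ X, t y = f^[m'] y := by
        intro y hy
        obtain ⟨x, hx, hfx⟩ := hbij.surjOn hy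
        have h1 : t y = x := by
          rw [← hfx]
          exact hrid x hx
        have h2 : f^[m'] y ∈ X := hfm.iterate m' hy
        have h3 : f (f^[m'] y) = f x := by
          rw [← Function.iterate_succ_apply' f m' y, hfix y hy, ← hfx]
        rw [h1, hfi h2 hx h3]
      show t (f q) = f^[m' + 1] q
      rw [Function.iterate_succ_apply, hkey (f q) hfq]
  · rintro ⟨i, hbij, m, _, hidem, rfl⟩
    intro s hs
    funext q
    show (a i)^[m] (s q) = s q
    exact iterate_fixed_on hbij.mapsTo hbij.injOn hidem (s q) (hmem s hs q)
end
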